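/- arXiv:1701.07211 — 2 statements merged into one kernel-verified Lean document; each statement's English description precedes it below -/
import Mathlib

section
/- Let v, a₁, a₂, s : ℝ² × ℝ → ℝ be smooth functions of (x,y,t), each ℤ²-periodic in (x,y), satisfying for all (x,y,t) the equations v_t + (1/2)e^{−2v}(−√2 e^{3v/2} a₂ v_y − 2√2 e^{3v/2} (a₁)_x + s_x) = 0 and 2(a₁)_x − 2(a₂)_y − a₁ v_x + a₂ v_y − √2 e^{−3v/2} s_x = 0. Then the area ∫_{[0,1]²} 2e^{v(x,y,t)} dx dy is independent of t. -/
open Real MeasureTheory intervalIntegral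

/-- Partial derivative in `x` of a function of `(x, y, t)`. -/
noncomputable def pdx (f : ℝ → ℝ → ℝ → ℝ) (x y t : ℝ) : ℝ :=
  deriv (fun x' => f x' y t) x

/-- Partial derivative in `y` of a function of `(x, y, t)`. -/
noncomputable def pdy (f : ℝ → ℝ → ℝ → ℝ) (x y t : ℝ) : ℝ :=
  deriv (fun y' => f x y' t) y

/-- Partial derivative in `t` of a function of `(x, y, t)`. -/
noncomputable def pdt (f : ℝ → ℝ → ℝ → ℝ) (x y t : ℝ) : ℝ :=
  deriv (fun t' => f x y t') t

section Aux

variable {f : ℝ → ℝ → ℝ → ℝ}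

private lemma hasDerivAt_pdx (hf : ContDiff ℝ (⊤ : ℕ∞) (fun p : ℝ × ℝ × ℝ => f p.1 p.2.1 p.2.2))
    (x y t : ℝ) : HasDerivAt (fun x' => f x' y t) (pdx f x y t) x := by
  have hc : HasDerivAt (fun x' : ℝ => ((x', y, t) : ℝ × ℝ × ℝ)) ((1, 0, 0) : ℝ × ℝ × ℝ) x :=
    (hasDerivAt_id x).prodMk ((hasDerivAt_const x y).prodMk (hasDerivAt_const x t))
  exact ((hf.differentiable (by simp) (x, y, t)).hasFDerivAt.comp_hasDerivAt x
    hc).differentiableAt.hasDerivAt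

private lemma hasDerivAt_pdy (hf : ContDiff ℝ (⊤ : ℕ∞) (fun p : ℝ × ℝ × ℝ => f p.1 p.2.1 p.2.2))
    (x y t : ℝ) : HasDerivAt (fun y' => f x y' t) (pdy f x y t) y := by
  have hc : HasDerivAt (fun y' : ℝ => ((x, y', t) : ℝ × ℝ × ℝ)) ((0, 1, 0) : ℝ × ℝ × ℝ) y :=
    (hasDerivAt_const y x).prodMk ((hasDerivAt_id y).prodMk (hasDerivAt_const y t))
  exact ((hf.differentiable (by simp) (x, y, t)).hasFDerivAt.comp_hasDerivAt y
    hc).differentiableAt.hasDerivAt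

private lemma hasDerivAt_pdt (hf : ContDiff ℝ (⊤ : ℕ∞) (fun p : ℝ × ℝ × ℝ => f p.1 p.2.1 p.2.2))
    (x y t : ℝ) : HasDerivAt (fun t' => f x y t') (pdt f x y t) t := by
  have hc : HasDerivAt (fun t' : ℝ => ((x, y, t') : ℝ × ℝ × ℝ)) ((0, 0, 1) : ℝ × ℝ × ℝ) t :=
    (hasDerivAt_const t x).prodMk ((hasDerivAt_const t y).prodMk (hasDerivAt_id t))
  exact ((hf.differentiable (by simp) (x, y, t)).hasFDerivAt.comp_hasDerivAt t
    hc).differentiableAt.hasDerivAt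

private lemma continuous_pdx (hf : ContDiff ℝ (⊤ : ℕ∞) (fun p : ℝ × ℝ × ℝ => f p.1 p.2.1 p.2.2)) :
    Continuous (fun p : ℝ × ℝ × ℝ => pdx f p.1 p.2.1 p.2.2) := by
  have h1 : Continuous fun p : ℝ × ℝ × ℝ =>
      fderiv ℝ (fun q : ℝ × ℝ × ℝ => f q.1 q.2.1 q.2.2) p ((1, 0, 0) : ℝ × ℝ × ℝ) :=
    (hf.continuous_fderiv (by simp)).clm_apply continuous_const
  have h2 : (fun p : ℝ × ℝ × ℝ => pdx f p.1 p.2.1 p.2.2) = fun p : ℝ × ℝ × ℝ =>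
      fderiv ℝ (fun q : ℝ × ℝ × ℝ => f q.1 q.2.1 q.2.2) p ((1, 0, 0) : ℝ × ℝ × ℝ) := by
    funext p
    have hc : HasDerivAt (fun x' : ℝ => ((x', p.2.1, p.2.2) : ℝ × ℝ × ℝ))
        ((1, 0, 0) : ℝ × ℝ × ℝ) p.1 :=
      (hasDerivAt_id _).prodMk ((hasDerivAt_const _ _).prodMk (hasDerivAt_const _ _))
    exact ((hf.differentiable (by simp) (p.1, p.2.1, p.2.2)).hasFDerivAt.comp_hasDerivAt p.1
      hc).deriv
  rw [h2]; exact h1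

private lemma continuous_pdy (hf : ContDiff ℝ (⊤ : ℕ∞) (fun p : ℝ × ℝ × ℝ => f p.1 p.2.1 p.2.2)) :
    Continuous (fun p : ℝ × ℝ × ℝ => pdy f p.1 p.2.1 p.2.2) := by
  have h1 : Continuous fun p : ℝ × ℝ × ℝ =>
      fderiv ℝ (fun q : ℝ × ℝ × ℝ => f q.1 q.2.1 q.2.2) p ((0, 1, 0) : ℝ × ℝ × ℝ) :=
    (hf.continuous_fderiv (by simp)).clm_apply continuous_const
  have h2 : (fun p : ℝ × ℝ × ℝ => pdy f p.1 p.2.1 p.2.2) = fun p : ℝ × ℝ × ℝ =>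
      fderiv ℝ (fun q : ℝ × ℝ × ℝ => f q.1 q.2.1 q.2.2) p ((0, 1, 0) : ℝ × ℝ × ℝ) := by
    funext p
    have hc : HasDerivAt (fun y' : ℝ => ((p.1, y', p.2.2) : ℝ × ℝ × ℝ))
        ((0, 1, 0) : ℝ × ℝ × ℝ) p.2.1 :=
      (hasDerivAt_const _ _).prodMk ((hasDerivAt_id _).prodMk (hasDerivAt_const _ _))
    exact ((hf.differentiable (by simp) (p.1, p.2.1, p.2.2)).hasFDerivAt.comp_hasDerivAt p.2.1
      hc).deriv
  rw [h2]; exact h1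

private lemma continuous_pdt (hf : ContDiff ℝ (⊤ : ℕ∞) (fun p : ℝ × ℝ × ℝ => f p.1 p.2.1 p.2.2)) :
    Continuous (fun p : ℝ × ℝ × ℝ => pdt f p.1 p.2.1 p.2.2) := by
  have h1 : Continuous fun p : ℝ × ℝ × ℝ =>
      fderiv ℝ (fun q : ℝ × ℝ × ℝ => f q.1 q.2.1 q.2.2) p ((0, 0, 1) : ℝ × ℝ × ℝ) :=
    (hf.continuous_fderiv (by simp)).clm_apply continuous_const
  have h2 : (fun p : ℝ × ℝ × ℝ => pdt f p.1 p.2.1 p.2.2) = fun p : ℝ × ℝ × ℝ =>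
      fderiv ℝ (fun q : ℝ × ℝ × ℝ => f q.1 q.2.1 q.2.2) p ((0, 0, 1) : ℝ × ℝ × ℝ) := by
    funext p
    have hc : HasDerivAt (fun t' : ℝ => ((p.1, p.2.1, t') : ℝ × ℝ × ℝ))
        ((0, 0, 1) : ℝ × ℝ × ℝ) p.2.2 :=
      (hasDerivAt_const _ _).prodMk ((hasDerivAt_const _ _).prodMk (hasDerivAt_id _))
    exact ((hf.differentiable (by simp) (p.1, p.2.1, p.2.2)).hasFDerivAt.comp_hasDerivAt p.2.2
      hc).deriv
  rw [h2]; exact h1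

private lemma key_algebra (vt vx vy a1v a2v a1x a2y sx V : ℝ)
    (h5 : vt + (1/2) * Real.exp (-2 * V) *
        (-Real.sqrt 2 * Real.exp ((3/2) * V) * a2v * vy
          - 2 * Real.sqrt 2 * Real.exp ((3/2) * V) * a1x + sx) = 0)
    (h7 : 2 * a1x - 2 * a2y - a1v * vx + a2v * vy
        - Real.sqrt 2 * Real.exp (-(3/2) * V) * sx = 0) :
    2 * Real.exp V * vt =
      Real.sqrt 2 * Real.exp (V/2) * (a1x + a1v * vx / 2)
        + Real.sqrt 2 * Real.exp (V/2) * (a2y + a2v * vy / 2) := by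
  have hE : (0:ℝ) < Real.exp (V/2) := Real.exp_pos _
  have hs2 : Real.sqrt 2 ^ 2 = 2 := Real.sq_sqrt (by norm_num)
  have e1 : Real.exp ((3/2) * V) = Real.exp (V/2) ^ 3 := by
    rw [show (3/2) * V = V/2 + V/2 + V/2 by ring, Real.exp_add, Real.exp_add]; ring
  have e2 : Real.exp (-(3/2) * V) = (Real.exp (V/2) ^ 3)⁻¹ := by
    rw [show -(3/2) * V = -((3/2)*V) by ring, Real.exp_neg, e1]
  have e3 : Real.exp (-2 * V) = (Real.exp (V/2) ^ 4)⁻¹ := by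
    rw [show -2 * V = -(V/2 + V/2 + V/2 + V/2) by ring, Real.exp_neg,
      Real.exp_add, Real.exp_add, Real.exp_add]; ring_nf
  have e4 : Real.exp V = Real.exp (V/2) ^ 2 := by
    rw [show V = V/2 + V/2 by ring, Real.exp_add]; ring
  rw [e1, e3] at h5
  rw [e2] at h7
  rw [e4]
  set E := Real.exp (V/2) with hEdef
  have h5' : 2*E^4*vt - Real.sqrt 2*E^3*a2v*vy - 2*Real.sqrt 2*E^3*a1x + sx = 0 := by
    field_simp at h5; linear_combination h5
  have h7' : (2*a1x - 2*a2y - a1v*vx + a2v*vy)*E^3 - Real.sqrt 2*sx = 0 := by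
    field_simp at h7; linear_combination h7
  have hsx : 2*sx = Real.sqrt 2*((2*a1x - 2*a2y - a1v*vx + a2v*vy)*E^3) := by
    linear_combination (-Real.sqrt 2)*h7' + (-sx)*hs2
  exact mul_left_cancel₀ (pow_ne_zero 2 hE.ne') (by linear_combination h5' + (-(1:ℝ)/2) * hsx)

private lemma hasDerivAt_param (H H' : ℝ → ℝ → ℝ)
    (hH : Continuous (Function.uncurry H))
    (hH' : Continuous (Function.uncurry H'))
    (hd : ∀ u y, HasDerivAt (fun u' => H u' y) (H' u y) u) (u₀ : ℝ) :
    HasDerivAt (fun u => ∫ y in (0:ℝ)..1, H u y) (∫ y in (0:ℝ)..1, H' u₀ y) u₀ := by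
  obtain ⟨C, hC⟩ :=
    ((isCompact_closedBall u₀ 1).prod
      (isCompact_Icc (a := (0:ℝ)) (b := 1))).exists_bound_of_continuousOn hH'.continuousOn
  have key := intervalIntegral.hasDerivAt_integral_of_dominated_loc_of_deriv_le
    (μ := volume) (F := H) (F' := H') (x₀ := u₀) (a := 0) (b := 1) (bound := fun _ => C)
    (Metric.ball_mem_nhds u₀ one_pos)
    (Filter.Eventually.of_forall fun u =>
      (hH.comp (Continuous.prodMk_right u)).aestronglyMeasurable)
    ((hH.comp (Continuous.prodMk_right u₀)).intervalIntegrable 0 1)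
    (hH'.comp (Continuous.prodMk_right u₀)).aestronglyMeasurable
    (Filter.Eventually.of_forall fun y hy u hu => by
      have hy' : y ∈ Set.Icc (0:ℝ) 1 :=
        Set.Ioc_subset_Icc_self (by rwa [Set.uIoc_of_le zero_le_one] at hy)
      exact hC (u, y) ⟨Metric.ball_subset_closedBall hu, hy'⟩)
    intervalIntegrable_const
    (Filter.Eventually.of_forall fun y _ u _ => hd u y)
  exact key.2


private noncomputable def DD (v : ℝ → ℝ → ℝ → ℝ) (x y τ : ℝ) : ℝ :=
  2 * Real.exp (v x y τ) * pdt v x y τ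

private noncomputable def PP (v a1 : ℝ → ℝ → ℝ → ℝ) (x y τ : ℝ) : ℝ :=
  Real.sqrt 2 * Real.exp (v x y τ / 2) * (pdx a1 x y τ + a1 x y τ * pdx v x y τ / 2)

private noncomputable def QQ (v a2 : ℝ → ℝ → ℝ → ℝ) (x y τ : ℝ) : ℝ :=
  Real.sqrt 2 * Real.exp (v x y τ / 2) * (pdy a2 x y τ + a2 x y τ * pdy v x y τ / 2)

private noncomputable def G1 (v a1 : ℝ → ℝ → ℝ → ℝ) (x y τ : ℝ) : ℝ :=
  Real.sqrt 2 * Real.exp (v x y τ / 2) * a1 x y τ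

private noncomputable def G2 (v a2 : ℝ → ℝ → ℝ → ℝ) (x y τ : ℝ) : ℝ :=
  Real.sqrt 2 * Real.exp (v x y τ / 2) * a2 x y τ

end Aux

/-- Theorem 1: a deformation of minimal Lagrangian tori (with fixed period lattice,
normalized to ℤ², so the conformal type is preserved) whose data `(v, a₁, a₂, s)`
satisfies equations (5) and (7) of the deformation system preserves the area
`∫∫ 2e^v dx dy` of the torus. -/
theorem deformation_preserves_area
    (v a1 a2 s : ℝ → ℝ → ℝ → ℝ)
    (hv : ContDiff ℝ (⊤ : ℕ∞) (fun p : ℝ × ℝ × ℝ => v p.1 p.2.1 p.2.2))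
    (ha1 : ContDiff ℝ (⊤ : ℕ∞) (fun p : ℝ × ℝ × ℝ => a1 p.1 p.2.1 p.2.2))
    (ha2 : ContDiff ℝ (⊤ : ℕ∞) (fun p : ℝ × ℝ × ℝ => a2 p.1 p.2.1 p.2.2))
    (hs : ContDiff ℝ (⊤ : ℕ∞) (fun p : ℝ × ℝ × ℝ => s p.1 p.2.1 p.2.2))
    (hper : ∀ f ∈ [v, a1, a2, s], ∀ x y t : ℝ,
      f (x + 1) y t = f x y t ∧ f x (y + 1) t = f x y t)
    (heq5 : ∀ x y t,
      pdt v x y t + (1/2) * Real.exp (-2 * v x y t) *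
        (-Real.sqrt 2 * Real.exp ((3/2) * v x y t) * a2 x y t * pdy v x y t
          - 2 * Real.sqrt 2 * Real.exp ((3/2) * v x y t) * pdx a1 x y t
          + pdx s x y t) = 0)
    (heq7 : ∀ x y t,
      2 * pdx a1 x y t - 2 * pdy a2 x y t - a1 x y t * pdx v x y t
        + a2 x y t * pdy v x y t
        - Real.sqrt 2 * Real.exp (-(3/2) * v x y t) * pdx s x y t = 0) :
    ∀ t t' : ℝ,
      (∫ x in (0:ℝ)..1, ∫ y in (0:ℝ)..1, 2 * Real.exp (v x y t)) =
      (∫ x in (0:ℝ)..1, ∫ y in (0:ℝ)..1, 2 * Real.exp (v x y t')) := by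
  -- continuity facts
  have CD : Continuous (fun p : ℝ × ℝ × ℝ => DD v p.1 p.2.1 p.2.2) :=
    (continuous_const.mul (Real.continuous_exp.comp hv.continuous)).mul (continuous_pdt hv)
  have CP : Continuous (fun p : ℝ × ℝ × ℝ => PP v a1 p.1 p.2.1 p.2.2) :=
    (continuous_const.mul (Real.continuous_exp.comp (hv.continuous.div_const 2))).mul
      ((continuous_pdx ha1).add
        ((ha1.continuous.mul (continuous_pdx hv)).div_const 2))
  have CQ : Continuous (fun p : ℝ × ℝ × ℝ => QQ v a2 p.1 p.2.1 p.2.2) :=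
    (continuous_const.mul (Real.continuous_exp.comp (hv.continuous.div_const 2))).mul
      ((continuous_pdy ha2).add
        ((ha2.continuous.mul (continuous_pdy hv)).div_const 2))
  have Cg1 : Continuous (fun p : ℝ × ℝ × ℝ => G1 v a1 p.1 p.2.1 p.2.2) :=
    (continuous_const.mul (Real.continuous_exp.comp (hv.continuous.div_const 2))).mul
      ha1.continuous
  -- pointwise key identity
  have hkey : ∀ x y τ, DD v x y τ = PP v a1 x y τ + QQ v a2 x y τ := by
    intro x y τ
    exact key_algebra (pdt v x y τ) (pdx v x y τ) (pdy v x y τ) (a1 x y τ) (a2 x y τ)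
      (pdx a1 x y τ) (pdy a2 x y τ) (pdx s x y τ) (v x y τ) (heq5 x y τ) (heq7 x y τ)
  -- derivative facts
  have hDt : ∀ x y τ, HasDerivAt (fun τ' => 2 * Real.exp (v x y τ')) (DD v x y τ) τ := by
    intro x y τ
    have h := ((hasDerivAt_pdt hv x y τ).exp).const_mul (2:ℝ)
    refine h.congr_deriv ?_
    simp only [DD]; ring
  have hg1x : ∀ x y τ, HasDerivAt (fun x' => G1 v a1 x' y τ) (PP v a1 x y τ) x := by
    intro x y τ
    have h := (((hasDerivAt_pdx hv x y τ).div_const 2).exp.const_mul (Real.sqrt 2)).mul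
      (hasDerivAt_pdx ha1 x y τ)
    refine h.congr_deriv ?_
    simp only [PP]; ring
  have hg2y : ∀ x y τ, HasDerivAt (fun y' => G2 v a2 x y' τ) (QQ v a2 x y τ) y := by
    intro x y τ
    have h := (((hasDerivAt_pdy hv x y τ).div_const 2).exp.const_mul (Real.sqrt 2)).mul
      (hasDerivAt_pdy ha2 x y τ)
    refine h.congr_deriv ?_
    simp only [QQ]; ring
  -- inner derivative (in t) of the y-integral
  have hinner : ∀ x τ₀, HasDerivAt (fun τ => ∫ y in (0:ℝ)..1, 2 * Real.exp (v x y τ))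
      (∫ y in (0:ℝ)..1, DD v x y τ₀) τ₀ := by
    intro x τ₀
    have hmap : Continuous fun q : ℝ × ℝ => ((x, q.2, q.1) : ℝ × ℝ × ℝ) :=
      continuous_const.prodMk (continuous_snd.prodMk continuous_fst)
    have hc1 : Continuous fun q : ℝ × ℝ => 2 * Real.exp (v x q.2 q.1) :=
      continuous_const.mul (Real.continuous_exp.comp (hv.continuous.comp hmap))
    have hc2 := CD.comp hmap
    exact hasDerivAt_param (fun τ y => 2 * Real.exp (v x y τ)) (fun τ y => DD v x y τ)
      hc1 hc2 (fun τ y => hDt x y τ) τ₀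
  -- outer derivative: A'(τ₀) = ∫∫ D
  have hA : ∀ τ₀, HasDerivAt (fun τ => ∫ x in (0:ℝ)..1, ∫ y in (0:ℝ)..1, 2 * Real.exp (v x y τ))
      (∫ x in (0:ℝ)..1, ∫ y in (0:ℝ)..1, DD v x y τ₀) τ₀ := by
    intro τ₀
    have hmap2 : Continuous fun r : (ℝ × ℝ) × ℝ => ((r.1.2, r.2, r.1.1) : ℝ × ℝ × ℝ) :=
      (continuous_fst.snd).prodMk (continuous_snd.prodMk continuous_fst.fst)
    have hcA1 : Continuous fun q : ℝ × ℝ => ∫ y in (0:ℝ)..1, 2 * Real.exp (v q.2 y q.1) := by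
      apply intervalIntegral.continuous_parametric_intervalIntegral_of_continuous'
        (f := fun (q : ℝ × ℝ) y => 2 * Real.exp (v q.2 y q.1)) ?_ 0 1
      show Continuous fun r : (ℝ × ℝ) × ℝ => 2 * Real.exp (v r.1.2 r.2 r.1.1)
      exact continuous_const.mul (Real.continuous_exp.comp (hv.continuous.comp hmap2))
    have hcA2 : Continuous fun q : ℝ × ℝ => ∫ y in (0:ℝ)..1, DD v q.2 y q.1 := by
      apply intervalIntegral.continuous_parametric_intervalIntegral_of_continuous'
        (f := fun (q : ℝ × ℝ) y => DD v q.2 y q.1) ?_ 0 1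
      have h := CD.comp hmap2
      exact h
    exact hasDerivAt_param (fun τ x => ∫ y in (0:ℝ)..1, 2 * Real.exp (v x y τ))
      (fun τ x => ∫ y in (0:ℝ)..1, DD v x y τ) hcA1 hcA2 (fun τ x => hinner x τ) τ₀
  -- the derivative vanishes
  have hzero : ∀ τ₀, (∫ x in (0:ℝ)..1, ∫ y in (0:ℝ)..1, DD v x y τ₀) = 0 := by
    intro τ₀
    -- ∫ Q dy = 0 by periodicity in y
    have hQzero : ∀ x : ℝ, (∫ y in (0:ℝ)..1, QQ v a2 x y τ₀) = 0 := by
      intro x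
      have hmapy : Continuous fun y : ℝ => ((x, y, τ₀) : ℝ × ℝ × ℝ) :=
        continuous_const.prodMk (continuous_id.prodMk continuous_const)
      have hQc : Continuous fun y : ℝ => QQ v a2 x y τ₀ := by
        have h := CQ.comp hmapy; exact h
      rw [intervalIntegral.integral_eq_sub_of_hasDerivAt (f := fun y => G2 v a2 x y τ₀)
        (fun y _ => hg2y x y τ₀) (hQc.intervalIntegrable 0 1)]
      have hv2 : v x 1 τ₀ = v x 0 τ₀ := by
        simpa using ((hper v (by simp)) x 0 τ₀).2
      have ha22 : a2 x 1 τ₀ = a2 x 0 τ₀ := by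
        simpa using ((hper a2 (by simp)) x 0 τ₀).2
      simp only [G2, hv2, ha22, sub_self]
    -- ∫ D dy = ∫ P dy
    have hsplit : ∀ x : ℝ, (∫ y in (0:ℝ)..1, DD v x y τ₀) = ∫ y in (0:ℝ)..1, PP v a1 x y τ₀ := by
      intro x
      have hmapy : Continuous fun y : ℝ => ((x, y, τ₀) : ℝ × ℝ × ℝ) :=
        continuous_const.prodMk (continuous_id.prodMk continuous_const)
      have hPc : Continuous fun y : ℝ => PP v a1 x y τ₀ := by
        have h := CP.comp hmapy; exact h
      have hQc : Continuous fun y : ℝ => QQ v a2 x y τ₀ := by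
        have h := CQ.comp hmapy; exact h
      have h1 : (∫ y in (0:ℝ)..1, DD v x y τ₀) =
          (∫ y in (0:ℝ)..1, PP v a1 x y τ₀) + ∫ y in (0:ℝ)..1, QQ v a2 x y τ₀ := by
        rw [← intervalIntegral.integral_add (hPc.intervalIntegrable 0 1)
          (hQc.intervalIntegrable 0 1)]
        apply intervalIntegral.integral_congr
        intro y _
        exact hkey x y τ₀
      rw [h1, hQzero, add_zero]
    have hstep : (∫ x in (0:ℝ)..1, ∫ y in (0:ℝ)..1, DD v x y τ₀) =
        ∫ x in (0:ℝ)..1, ∫ y in (0:ℝ)..1, PP v a1 x y τ₀ := by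
      apply intervalIntegral.integral_congr
      intro x _
      exact hsplit x
    rw [hstep]
    -- ∫∫ P = W(1) - W(0) = 0, with W x = ∫ G1 v a1 x y dy
    have hmapg : Continuous fun q : ℝ × ℝ => ((q.1, q.2, τ₀) : ℝ × ℝ × ℝ) :=
      continuous_fst.prodMk (continuous_snd.prodMk continuous_const)
    have hW : ∀ x : ℝ, HasDerivAt (fun x' => ∫ y in (0:ℝ)..1, G1 v a1 x' y τ₀)
        (∫ y in (0:ℝ)..1, PP v a1 x y τ₀) x := by
      intro x
      have hcW1 := Cg1.comp hmapg
      have hcW2 := CP.comp hmapg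
      exact hasDerivAt_param (fun x' y => G1 v a1 x' y τ₀) (fun x' y => PP v a1 x' y τ₀)
        hcW1 hcW2 (fun x' y => hg1x x' y τ₀) x
    have hcP : Continuous fun x : ℝ => ∫ y in (0:ℝ)..1, PP v a1 x y τ₀ := by
      apply intervalIntegral.continuous_parametric_intervalIntegral_of_continuous'
        (f := fun (x : ℝ) y => PP v a1 x y τ₀) ?_ 0 1
      have h := CP.comp hmapg
      exact h
    rw [intervalIntegral.integral_eq_sub_of_hasDerivAt
      (f := fun x => ∫ y in (0:ℝ)..1, G1 v a1 x y τ₀) (fun x _ => hW x)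
      (hcP.intervalIntegrable 0 1)]
    have hper1 : ∀ y : ℝ, G1 v a1 1 y τ₀ = G1 v a1 0 y τ₀ := by
      intro y
      have hv1 : v 1 y τ₀ = v 0 y τ₀ := by
        simpa using ((hper v (by simp)) 0 y τ₀).1
      have ha11 : a1 1 y τ₀ = a1 0 y τ₀ := by
        simpa using ((hper a1 (by simp)) 0 y τ₀).1
      simp only [G1, hv1, ha11]
    have : (∫ y in (0:ℝ)..1, G1 v a1 1 y τ₀) = ∫ y in (0:ℝ)..1, G1 v a1 0 y τ₀ := by
      apply intervalIntegral.integral_congr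
      intro y _
      exact hper1 y
    rw [this, sub_self]
  -- conclude
  intro t t'
  have hdiff : Differentiable ℝ
      (fun τ => ∫ x in (0:ℝ)..1, ∫ y in (0:ℝ)..1, 2 * Real.exp (v x y τ)) :=
    fun τ => (hA τ).differentiableAt
  have hd0 : ∀ τ, deriv
      (fun τ => ∫ x in (0:ℝ)..1, ∫ y in (0:ℝ)..1, 2 * Real.exp (v x y τ)) τ = 0 := by
    intro τ
    rw [(hA τ).deriv, hzero τ]
  exact is_const_of_deriv_eq_zero hdiff hd0 t t'
end

section
/- Let v, a₁, a₂, s : ℝ² × ℝ → ℝ be smooth functions of (x,y,t) satisfying, at every point, v_t + (1/2)e^{−2v}(−√2 e^{3v/2} a₂ v_y − 2√2 e^{3v/2} (a₁)_x + s_x) = 0 and 2(a₁)_x − 2(a₂)_y − a₁ v_x + a₂ v_y − √2 e^{−3v/2} s_x = 0. Then at every point, ∂_t(2e^{v}) = √2·( ∂_x(e^{v/2} a₁) + ∂_y(e^{v/2} a₂) ). That is, the t-derivative of the area density 2e^v is the divergence of the vector field √2 e^{v/2}(a₁, a₂), i.e. ∂_t(2e^v) dx∧dy = dω with ω = √2 e^{v/2}(a₁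 dy − a₂ dx). -/
open Real

/-- Equations (5) and (7) of the deformation system imply that the `t`-derivative of
the area density `2e^v` is the divergence of the vector field `√2 e^{v/2}(a₁, a₂)`:
`∂_t(2e^v) = √2(∂_x(e^{v/2}a₁) + ∂_y(e^{v/2}a₂))`, i.e. `∂_t(2e^v)dx∧dy = dω` with
`ω = √2 e^{v/2}(a₁ dy − a₂ dx)`. -/
theorem area_density_derivative_is_exact
    (v a1 a2 s : ℝ → ℝ → ℝ → ℝ)
    (hv : ContDiff ℝ (⊤ : ℕ∞) (fun p : ℝ × ℝ × ℝ => v p.1 p.2.1 p.2.2))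
    (ha1 : ContDiff ℝ (⊤ : ℕ∞) (fun p : ℝ × ℝ × ℝ => a1 p.1 p.2.1 p.2.2))
    (ha2 : ContDiff ℝ (⊤ : ℕ∞) (fun p : ℝ × ℝ × ℝ => a2 p.1 p.2.1 p.2.2))
    (hs : ContDiff ℝ (⊤ : ℕ∞) (fun p : ℝ × ℝ × ℝ => s p.1 p.2.1 p.2.2))
    (heq5 : ∀ x y t,
      pdt v x y t + (1/2) * Real.exp (-2 * v x y t) *
        (-Real.sqrt 2 * Real.exp ((3/2) * v x y t) * a2 x y t * pdy v x y t
          - 2 * Real.sqrt 2 * Real.exp ((3/2) * v x y t) * pdx a1 x y t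
          + pdx s x y t) = 0)
    (heq7 : ∀ x y t,
      2 * pdx a1 x y t - 2 * pdy a2 x y t - a1 x y t * pdx v x y t
        + a2 x y t * pdy v x y t
        - Real.sqrt 2 * Real.exp (-(3/2) * v x y t) * pdx s x y t = 0) :
    ∀ x y t,
      deriv (fun t' => 2 * Real.exp (v x y t')) t =
        Real.sqrt 2 *
          (deriv (fun x' => Real.exp (v x' y t / 2) * a1 x' y t) x +
           deriv (fun y' => Real.exp (v x y' t / 2) * a2 x y' t) y) := by

  intro x y t
  -- differentiability of slices
  have sx : ∀ (f : ℝ → ℝ → ℝ → ℝ), ContDiff ℝ (⊤ : ℕ∞) (fun p : ℝ × ℝ × ℝ => f p.1 p.2.1 p.2.2) →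
      DifferentiableAt ℝ (fun x' => f x' y t) x := by
    intro f hf
    exact ((hf.differentiable (by simp)).comp
      ((differentiable_id.prodMk (differentiable_const (y, t))))).differentiableAt
  have sy : ∀ (f : ℝ → ℝ → ℝ → ℝ), ContDiff ℝ (⊤ : ℕ∞) (fun p : ℝ × ℝ × ℝ => f p.1 p.2.1 p.2.2) →
      DifferentiableAt ℝ (fun y' => f x y' t) y := by
    intro f hf
    exact ((hf.differentiable (by simp)).comp
      ((differentiable_const x).prodMk (differentiable_id.prodMk (differentiable_const t)))).differentiableAt
  have st : ∀ (f : ℝ → ℝ → ℝ → ℝ), ContDiff ℝ (⊤ : ℕ∞) (fun p : ℝ × ℝ × ℝ => f p.1 p.2.1 p.2.2) →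
      DifferentiableAt ℝ (fun t' => f x y t') t := by
    intro f hf
    exact ((hf.differentiable (by simp)).comp
      ((differentiable_const x).prodMk ((differentiable_const y).prodMk differentiable_id))).differentiableAt
  have hvx : HasDerivAt (fun x' => v x' y t) (pdx v x y t) x := (sx v hv).hasDerivAt
  have hvy : HasDerivAt (fun y' => v x y' t) (pdy v x y t) y := (sy v hv).hasDerivAt
  have hvt : HasDerivAt (fun t' => v x y t') (pdt v x y t) t := (st v hv).hasDerivAt
  have ha1x : HasDerivAt (fun x' => a1 x' y t) (pdx a1 x y t) x := (sx a1 ha1).hasDerivAt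
  have ha2y : HasDerivAt (fun y' => a2 x y' t) (pdy a2 x y t) y := (sy a2 ha2).hasDerivAt
  -- compute the three derivatives in the goal
  have hL : deriv (fun t' => 2 * Real.exp (v x y t')) t
      = 2 * (Real.exp (v x y t) * pdt v x y t) := by
    have := (hvt.exp.const_mul 2).deriv
    simpa using this
  have hR1 : deriv (fun x' => Real.exp (v x' y t / 2) * a1 x' y t) x
      = Real.exp (v x y t / 2) * (pdx v x y t / 2) * a1 x y t
        + Real.exp (v x y t / 2) * pdx a1 x y t := by
    have := ((hvx.div_const 2).exp.mul ha1x).deriv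
    exact this
  have hR2 : deriv (fun y' => Real.exp (v x y' t / 2) * a2 x y' t) y
      = Real.exp (v x y t / 2) * (pdy v x y t / 2) * a2 x y t
        + Real.exp (v x y t / 2) * pdy a2 x y t := by
    have := ((hvy.div_const 2).exp.mul ha2y).deriv
    exact this
  rw [hL, hR1, hR2]
  -- abbreviations
  set u := Real.exp (v x y t / 2) with hu_def
  have hu : 0 < u := Real.exp_pos _
  have hev : Real.exp (v x y t) = u ^ 2 := by
    rw [hu_def, ← Real.exp_nat_mul]; congr 1; push_cast; ring
  have he32 : Real.exp ((3/2) * v x y t) = u ^ 3 := by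
    rw [hu_def, ← Real.exp_nat_mul]; congr 1; push_cast; ring
  have hem2 : Real.exp (-2 * v x y t) = (u ^ 4)⁻¹ := by
    rw [hu_def, ← Real.exp_nat_mul, ← Real.exp_neg]; congr 1; push_cast; ring
  have hem32 : Real.exp (-(3/2) * v x y t) = (u ^ 3)⁻¹ := by
    rw [hu_def, ← Real.exp_nat_mul, ← Real.exp_neg]; congr 1; push_cast; ring
  have E5 := heq5 x y t
  have E7 := heq7 x y t
  rw [hem2, he32] at E5
  rw [hem32] at E7
  rw [hev]
  have hsq : Real.sqrt 2 * Real.sqrt 2 = 2 := Real.mul_self_sqrt (by norm_num)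
  have hne : (u : ℝ) ≠ 0 := ne_of_gt hu
  field_simp at E5 E7
  have key : u ^ 2 * (2 * (u ^ 2 * pdt v x y t)) =
      u ^ 2 * (Real.sqrt 2 *
        (u * (pdx v x y t / 2) * a1 x y t + u * pdx a1 x y t +
          (u * (pdy v x y t / 2) * a2 x y t + u * pdy a2 x y t))) := by
    linear_combination E5 + (Real.sqrt 2 / 2) * E7 + (pdx s x y t / 2) * hsq
  exact mul_left_cancel₀ (pow_ne_zero 2 hne) key
end
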